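/- Let ν > 0, η ∈ ℝ, let G_x be an n×n and G_y an m×m Hermitian positive semidefinite complex matrix, set A_x = -(ν+iη)G_x, A_y = -(ν+iη)G_y. Let κ, ξ, γ be real numbers, define G(U)_{ij} = −(κ + iξ)|U_{ij}|² U_{ij} + γ U_{ij} on complex n×m matrices, and set L = 3√(κ² + ξ²) δ² + |γ| for some δ ≥ 0. Suppose u, v : [0, τ] → ℂ^{n×m} are differentiable with u' = G(u), v' = G(v), and all entries of u(t) and v(t) have modulus at most δ on [0, τ]. Then ‖exp(τA_x) u(τ) exp(τA_y) − exp(τA_x) v(τ) exp(τA_y)‖_F ≤ e^{L τ} ‖u(0) − v(0)‖_F. -/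

import Mathlib

/-!
The linear flow `W ↦ exp(τA_x) W exp(τA_y)` does not increase the Frobenius norm: writing the
Hermitian `G = U diag(λ) U*` gives `exp(cG) = U diag(e^{cλᵢ}) U*` with `|e^{cλᵢ}| ≤ 1` because
`Re c ≤ 0 ≤ λᵢ`, and unitary factors preserve the Frobenius norm. The nonlinearity is
`L`-Lipschitz on the box `|Uᵢⱼ| ≤ δ`, because
`|a|²a - |b|²b = |a|²(a - b) + (|a| - |b|)(|a| + |b|) b`, so Gronwall's inequality bounds the
distance of the two nonlinear trajectories at time `τ` by `e^{Lτ}` times their initial distance.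
-/

open scoped BigOperators ComplexOrder

attribute [local instance] Matrix.frobeniusNormedAddCommGroup Matrix.frobeniusNormedSpace

/-- Frobenius norm of a complex matrix. -/
noncomputable def frobNorm {n m : ℕ} (Z : Matrix (Fin n) (Fin m) ℂ) : ℝ :=
  Real.sqrt (∑ i, ∑ j, ‖Z i j‖ ^ 2)

/-- The entrywise nonlinearity `G(U)_{ij} = -(κ + iξ)|U_{ij}|² U_{ij} + γ U_{ij}`. -/
noncomputable def Gnl (κ ξ γ : ℝ) {n m : ℕ} (U : Matrix (Fin n) (Fin m) ℂ) :
    Matrix (Fin n) (Fin m) ℂ :=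
  Matrix.of fun i j =>
    -((κ : ℂ) + (ξ : ℂ) * Complex.I) * ((‖U i j‖ ^ 2 : ℝ) : ℂ) * U i j + (γ : ℂ) * U i j

open scoped Matrix

namespace Matrix

section Frobenius

variable {𝕜 : Type*} [RCLike 𝕜] {m n : Type*} [Fintype m] [Fintype n]

theorem frobenius_norm_le_of_forall_norm_le {A B : Matrix m n 𝕜} (h : ∀ i j, ‖A i j‖ ≤ ‖B i j‖) :
    ‖A‖ ≤ ‖B‖ := by
  rw [frobenius_norm_def, frobenius_norm_def]
  gcongr with i _ j _
  exact h i j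

theorem frobenius_norm_sq_eq_re_trace (Z : Matrix m n 𝕜) :
    ‖Z‖ ^ 2 = RCLike.re (Zᴴ * Z).trace := by
  rw [frobenius_norm_def, ← Real.sqrt_eq_rpow, Real.sq_sqrt (by positivity)]
  simp only [Real.rpow_two]
  rw [trace, map_sum, Finset.sum_comm]
  refine Finset.sum_congr rfl fun j _ => ?_
  rw [diag_apply, mul_apply, map_sum]
  refine Finset.sum_congr rfl fun i _ => ?_
  rw [conjTranspose_apply, RCLike.star_def, RCLike.conj_mul, ← RCLike.ofReal_pow, RCLike.ofReal_re]

theorem frobenius_norm_unitary_mul [DecidableEq m] {U : Matrix m m 𝕜} (hU : U ∈ unitaryGroup m 𝕜)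
    (Z : Matrix m n 𝕜) : ‖U * Z‖ = ‖Z‖ := by
  refine (pow_left_inj₀ (norm_nonneg _) (norm_nonneg _) two_ne_zero).mp ?_
  rw [frobenius_norm_sq_eq_re_trace, frobenius_norm_sq_eq_re_trace, conjTranspose_mul,
    Matrix.mul_assoc, ← Matrix.mul_assoc Uᴴ, ← star_eq_conjTranspose,
    mem_unitaryGroup_iff'.mp hU, Matrix.one_mul]

theorem frobenius_norm_mul_unitary [DecidableEq n] {U : Matrix n n 𝕜} (hU : U ∈ unitaryGroup n 𝕜)
    (Z : Matrix m n 𝕜) : ‖Z * U‖ = ‖Z‖ := by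
  rw [← frobenius_norm_conjTranspose, conjTranspose_mul, ← star_eq_conjTranspose U,
    frobenius_norm_unitary_mul (Unitary.star_mem hU), frobenius_norm_conjTranspose]

theorem frobenius_norm_diagonal_mul_le [DecidableEq m] {d : m → 𝕜} (hd : ∀ i, ‖d i‖ ≤ 1)
    (Z : Matrix m n 𝕜) : ‖diagonal d * Z‖ ≤ ‖Z‖ :=
  frobenius_norm_le_of_forall_norm_le fun i j => by
    rw [diagonal_mul, norm_mul]
    exact mul_le_of_le_one_left (norm_nonneg _) (hd i)

theorem frobenius_norm_mul_diagonal_le [DecidableEq n] {d : n → 𝕜} (hd : ∀ j, ‖d j‖ ≤ 1)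
    (Z : Matrix m n 𝕜) : ‖Z * diagonal d‖ ≤ ‖Z‖ :=
  frobenius_norm_le_of_forall_norm_le fun i j => by
    rw [mul_diagonal, norm_mul]
    exact mul_le_of_le_one_right (norm_nonneg _) (hd j)

end Frobenius

section Exp

variable {n : Type*} [Fintype n] [DecidableEq n]

theorem IsHermitian.exp_smul_eq {G : Matrix n n ℂ} (hG : G.IsHermitian) (c : ℂ) :
    NormedSpace.exp (c • G) = (hG.eigenvectorUnitary : Matrix n n ℂ) *
      diagonal (fun i => Complex.exp (c * hG.eigenvalues i)) *
        star (hG.eigenvectorUnitary : Matrix n n ℂ) := by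
  set U : Matrix n n ℂ := (hG.eigenvectorUnitary : Matrix n n ℂ)
  have hUU : U * star U = 1 := mem_unitaryGroup_iff.mp hG.eigenvectorUnitary.2
  have hU : IsUnit U := ⟨⟨U, star U, hUU, mem_unitaryGroup_iff'.mp hG.eigenvectorUnitary.2⟩, rfl⟩
  have hUinv : U⁻¹ = star U := inv_eq_right_inv hUU
  have hcG : c • G = U * diagonal (fun i => c * hG.eigenvalues i) * U⁻¹ := by
    conv_lhs => rw [hG.spectral_theorem]
    rw [Unitary.conjStarAlgAut_apply, hUinv, ← Matrix.smul_mul, ← Matrix.mul_smul, ← diagonal_smul]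
    rfl
  rw [hcG, exp_conj _ _ hU, exp_diagonal, hUinv, Pi.exp_def]
  simp only [Complex.exp_eq_exp_ℂ]

theorem PosSemidef.norm_exp_mul_eigenvalues_le_one {G : Matrix n n ℂ} (hG : G.PosSemidef) {c : ℂ}
    (hc : c.re ≤ 0) (i : n) : ‖Complex.exp (c * hG.1.eigenvalues i)‖ ≤ 1 := by
  rw [Complex.norm_exp, Real.exp_le_one_iff, Complex.re_mul_ofReal]
  exact mul_nonpos_of_nonpos_of_nonneg hc (hG.eigenvalues_nonneg i)

variable {m : Type*} [Fintype m]

theorem PosSemidef.frobenius_norm_exp_smul_mul_le {G : Matrix n n ℂ} (hG : G.PosSemidef) {c : ℂ}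
    (hc : c.re ≤ 0) (Z : Matrix n m ℂ) : ‖NormedSpace.exp (c • G) * Z‖ ≤ ‖Z‖ := by
  set U := hG.1.eigenvectorUnitary
  rw [hG.1.exp_smul_eq, Matrix.mul_assoc, Matrix.mul_assoc, frobenius_norm_unitary_mul U.2,
    ← frobenius_norm_unitary_mul (Unitary.star_mem U.2) Z]
  exact frobenius_norm_diagonal_mul_le (hG.norm_exp_mul_eigenvalues_le_one hc) _

theorem PosSemidef.frobenius_norm_mul_exp_smul_le {G : Matrix n n ℂ} (hG : G.PosSemidef) {c : ℂ}
    (hc : c.re ≤ 0) (Z : Matrix m n ℂ) : ‖Z * NormedSpace.exp (c • G)‖ ≤ ‖Z‖ := by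
  set U := hG.1.eigenvectorUnitary
  rw [hG.1.exp_smul_eq, ← Matrix.mul_assoc, ← Matrix.mul_assoc,
    frobenius_norm_mul_unitary (Unitary.star_mem U.2), ← frobenius_norm_mul_unitary U.2 Z]
  exact frobenius_norm_mul_diagonal_le (hG.norm_exp_mul_eigenvalues_le_one hc) _

end Exp

end Matrix

theorem frobNorm_eq_norm {n m : ℕ} (Z : Matrix (Fin n) (Fin m) ℂ) : frobNorm Z = ‖Z‖ := by
  rw [frobNorm, Matrix.frobenius_norm_def, Real.sqrt_eq_rpow]
  simp only [Real.rpow_two]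

theorem norm_norm_sq_smul_sub_le {E : Type*} [NormedAddCommGroup E] [NormedSpace ℝ E]
    {a b : E} {δ : ℝ} (ha : ‖a‖ ≤ δ) (hb : ‖b‖ ≤ δ) :
    ‖‖a‖ ^ 2 • a - ‖b‖ ^ 2 • b‖ ≤ 3 * δ ^ 2 * ‖a - b‖ := by
  have hδ : 0 ≤ δ := (norm_nonneg b).trans hb
  have hsq : |‖a‖ ^ 2 - ‖b‖ ^ 2| ≤ 2 * δ * ‖a - b‖ := by
    rw [sq_sub_sq, abs_mul, abs_of_nonneg (by positivity)]
    exact mul_le_mul (by linarith) (abs_norm_sub_norm_le a b) (abs_nonneg _) (by positivity)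
  calc ‖‖a‖ ^ 2 • a - ‖b‖ ^ 2 • b‖
      = ‖‖a‖ ^ 2 • (a - b) + (‖a‖ ^ 2 - ‖b‖ ^ 2) • b‖ := by
        rw [smul_sub, sub_smul, sub_add_sub_cancel]
    _ ≤ ‖a‖ ^ 2 * ‖a - b‖ + |‖a‖ ^ 2 - ‖b‖ ^ 2| * ‖b‖ := by
        refine (norm_add_le _ _).trans_eq ?_
        rw [norm_smul, norm_smul, Real.norm_of_nonneg (by positivity), Real.norm_eq_abs]
    _ ≤ δ ^ 2 * ‖a - b‖ + (2 * δ * ‖a - b‖) * δ := by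
        gcongr
    _ = 3 * δ ^ 2 * ‖a - b‖ := by ring

theorem Gnl_lipschitzOnWith (κ ξ γ δ : ℝ) (n m : ℕ) :
    LipschitzOnWith (3 * Real.sqrt (κ ^ 2 + ξ ^ 2) * δ ^ 2 + |γ|).toNNReal
      (Gnl κ ξ γ (n := n) (m := m)) {U | ∀ i j, ‖U i j‖ ≤ δ} := by
  set L := 3 * Real.sqrt (κ ^ 2 + ξ ^ 2) * δ ^ 2 + |γ|
  have hL : 0 ≤ L := by positivity
  refine lipschitzOnWith_iff_norm_sub_le.mpr fun U hU V hV => ?_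
  rw [Real.coe_toNNReal _ hL, ← norm_smul_of_nonneg hL]
  refine Matrix.frobenius_norm_le_of_forall_norm_le fun i j => ?_
  simp only [Gnl, Matrix.sub_apply, Matrix.smul_apply, Matrix.of_apply]
  rw [norm_smul_of_nonneg hL]
  set c : ℂ := -((κ : ℂ) + (ξ : ℂ) * Complex.I)
  set a := U i j
  set b := V i j
  have hc : ‖c‖ = Real.sqrt (κ ^ 2 + ξ ^ 2) := by rw [norm_neg, Complex.norm_add_mul_I]
  have hsplit : c * ((‖a‖ ^ 2 : ℝ) : ℂ) * a + γ * a - (c * ((‖b‖ ^ 2 : ℝ) : ℂ) * b + γ * b) =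
      c * (‖a‖ ^ 2 • a - ‖b‖ ^ 2 • b) + γ * (a - b) := by
    simp only [Complex.real_smul]
    ring
  calc ‖c * ((‖a‖ ^ 2 : ℝ) : ℂ) * a + γ * a - (c * ((‖b‖ ^ 2 : ℝ) : ℂ) * b + γ * b)‖
      ≤ ‖c‖ * ‖‖a‖ ^ 2 • a - ‖b‖ ^ 2 • b‖ + |γ| * ‖a - b‖ := by
        rw [hsplit, ← norm_mul, ← Real.norm_eq_abs, ← Complex.norm_real, ← norm_mul]
        exact norm_add_le _ _
    _ ≤ Real.sqrt (κ ^ 2 + ξ ^ 2) * (3 * δ ^ 2 * ‖a - b‖) + |γ| * ‖a - b‖ := by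
        rw [hc]
        gcongr
        exact norm_norm_sq_smul_sub_le (hU i j) (hV i j)
    _ = L * ‖a - b‖ := by ring

theorem dist_le_of_trajectories_lipschitzOnWith {E : Type*} [NormedAddCommGroup E]
    [NormedSpace ℝ E] {F : E → E} {K : NNReal} {s : Set E} (hF : LipschitzOnWith K F s)
    {u v : ℝ → E} {a b : ℝ} (hab : a ≤ b)
    (hu : ∀ t ∈ Set.Icc a b, HasDerivAt u (F (u t)) t)
    (hv : ∀ t ∈ Set.Icc a b, HasDerivAt v (F (v t)) t)
    (hus : ∀ t ∈ Set.Icc a b, u t ∈ s) (hvs : ∀ t ∈ Set.Icc a b, v t ∈ s) :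
    dist (u b) (v b) ≤ dist (u a) (v a) * Real.exp (K * (b - a)) :=
  dist_le_of_trajectories_ODE_of_mem (v := fun _ => F) (s := fun _ => s) (fun _ _ => hF)
    (fun t ht => (hu t ht).continuousAt.continuousWithinAt)
    (fun t ht => (hu t (Set.Ico_subset_Icc_self ht)).hasDerivWithinAt)
    (fun t ht => hus t (Set.Ico_subset_Icc_self ht))
    (fun t ht => (hv t ht).continuousAt.continuousWithinAt)
    (fun t ht => (hv t (Set.Ico_subset_Icc_self ht)).hasDerivWithinAt)
    (fun t ht => hvs t (Set.Ico_subset_Icc_self ht)) le_rfl b ⟨hab, le_rfl⟩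

theorem stmt_10_general {n m : ℕ} (ν η : ℝ) (hν : 0 < ν)
    (Gx : Matrix (Fin n) (Fin n) ℂ) (Gy : Matrix (Fin m) (Fin m) ℂ)
    (hGx : Gx.PosSemidef) (hGy : Gy.PosSemidef)
    (Ax : Matrix (Fin n) (Fin n) ℂ) (Ay : Matrix (Fin m) (Fin m) ℂ)
    (hAx : Ax = (-((ν : ℂ) + (η : ℂ) * Complex.I)) • Gx)
    (hAy : Ay = (-((ν : ℂ) + (η : ℂ) * Complex.I)) • Gy)
    (κ ξ γ δ τ : ℝ) (hτ : 0 ≤ τ)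
    (L : ℝ) (hL : L = 3 * Real.sqrt (κ ^ 2 + ξ ^ 2) * δ ^ 2 + |γ|)
    (u v : ℝ → Matrix (Fin n) (Fin m) ℂ)
    (hu : ∀ t ∈ Set.Icc (0 : ℝ) τ, HasDerivAt u (Gnl κ ξ γ (u t)) t)
    (hv : ∀ t ∈ Set.Icc (0 : ℝ) τ, HasDerivAt v (Gnl κ ξ γ (v t)) t)
    (hub : ∀ t ∈ Set.Icc (0 : ℝ) τ, ∀ i j, ‖u t i j‖ ≤ δ)
    (hvb : ∀ t ∈ Set.Icc (0 : ℝ) τ, ∀ i j, ‖v t i j‖ ≤ δ) :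
    frobNorm (NormedSpace.exp (τ • Ax) * u τ * NormedSpace.exp (τ • Ay) -
        NormedSpace.exp (τ • Ax) * v τ * NormedSpace.exp (τ • Ay)) ≤
      Real.exp (L * τ) * frobNorm (u 0 - v 0) := by
  set c : ℂ := τ * -((ν : ℂ) + (η : ℂ) * Complex.I)
  have hc : c.re ≤ 0 := by
    simp only [c, Complex.re_ofReal_mul, Complex.neg_re, Complex.add_re, Complex.ofReal_re,
      Complex.mul_I_re, Complex.ofReal_im, neg_zero, add_zero]
    nlinarith
  have hτAx : τ • Ax = c • Gx := by rw [hAx, ← smul_assoc, Complex.real_smul]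
  have hτAy : τ • Ay = c • Gy := by rw [hAy, ← smul_assoc, Complex.real_smul]
  have hgronwall : dist (u τ) (v τ) ≤ dist (u 0) (v 0) * Real.exp (L * τ) := by
    have := dist_le_of_trajectories_lipschitzOnWith (Gnl_lipschitzOnWith κ ξ γ δ n m) hτ hu hv
      hub hvb
    rwa [sub_zero, Real.coe_toNNReal _ (by positivity), ← hL] at this
  rw [frobNorm_eq_norm, frobNorm_eq_norm, ← Matrix.sub_mul, ← Matrix.mul_sub, hτAx, hτAy]
  calc ‖NormedSpace.exp (c • Gx) * (u τ - v τ) * NormedSpace.exp (c • Gy)‖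
      ≤ ‖NormedSpace.exp (c • Gx) * (u τ - v τ)‖ := hGy.frobenius_norm_mul_exp_smul_le hc _
    _ ≤ ‖u τ - v τ‖ := hGx.frobenius_norm_exp_smul_mul_le hc _
    _ ≤ Real.exp (L * τ) * ‖u 0 - v 0‖ := by
        rw [← dist_eq_norm, ← dist_eq_norm, mul_comm]
        exact hgronwall

theorem stmt_10 {n m : ℕ} (ν η : ℝ) (hν : 0 < ν)
    (Gx : Matrix (Fin n) (Fin n) ℂ) (Gy : Matrix (Fin m) (Fin m) ℂ)
    (hGx : Gx.PosSemidef) (hGy : Gy.PosSemidef)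
    (Ax : Matrix (Fin n) (Fin n) ℂ) (Ay : Matrix (Fin m) (Fin m) ℂ)
    (hAx : Ax = (-((ν : ℂ) + (η : ℂ) * Complex.I)) • Gx)
    (hAy : Ay = (-((ν : ℂ) + (η : ℂ) * Complex.I)) • Gy)
    (κ ξ γ δ τ : ℝ) (hδ : 0 ≤ δ) (hτ : 0 ≤ τ)
    (L : ℝ) (hL : L = 3 * Real.sqrt (κ ^ 2 + ξ ^ 2) * δ ^ 2 + |γ|)
    (u v : ℝ → Matrix (Fin n) (Fin m) ℂ)
    (hu : ∀ t ∈ Set.Icc (0 : ℝ) τ, HasDerivAt u (Gnl κ ξ γ (u t)) t)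
    (hv : ∀ t ∈ Set.Icc (0 : ℝ) τ, HasDerivAt v (Gnl κ ξ γ (v t)) t)
    (hub : ∀ t ∈ Set.Icc (0 : ℝ) τ, ∀ i j, ‖u t i j‖ ≤ δ)
    (hvb : ∀ t ∈ Set.Icc (0 : ℝ) τ, ∀ i j, ‖v t i j‖ ≤ δ) :
    frobNorm (NormedSpace.exp (τ • Ax) * u τ * NormedSpace.exp (τ • Ay) -
        NormedSpace.exp (τ • Ax) * v τ * NormedSpace.exp (τ • Ay)) ≤
      Real.exp (L * τ) * frobNorm (u 0 - v 0) :=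
  stmt_10_general ν η hν Gx Gy hGx hGy Ax Ay hAx hAy κ ξ γ δ τ hτ L hL u v hu hv hub hvb
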